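/- Let G = (V,E) be a digraph with no isolated vertices, m edges, and relative edge connectivity k (the minimum number of edges whose removal changes the reachability relation). Then G has a reachability-equivalent subgraph with at most 5m/k edges. -/

import Mathlib

/-!
Let `N` be the vertices that are not the chosen root of their strongly connected component, and
`P` the covering pairs `A ⋖ B` of the condensation (the antisymmetrization of the reachability
preorder). Keeping, inside each component, an in- and an out-arborescence at its root, and one
edge for each covering pair, gives at most `2|N| + |P|` edges and preserves reachability, because
the order of the finite condensation is generated by its covering relation.

Conversely, the edges leaving a vertex of `N` inside its component, and the edges from `A` to `B`
for `(A, B) ∈ P`, form `|N| + |P|` pairwise disjoint edge sets, each of whose deletion changes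
reachability; each has at least `k` edges, so `k (|N| + |P|) ≤ m` and the subgraph has at most
`2m/k` edges.
-/

/-- Reachability in a digraph given by an edge finset. -/
def Reach {V : Type*} [DecidableEq V] (E : Finset (V × V)) (u v : V) : Prop :=
  Relation.ReflTransGen (fun a b => (a, b) ∈ E) u v

open Finset Relation

theorem Finset.exists_subset_card_le_of_forall_exists {α β : Type*} [DecidableEq β]
    {s : Finset α} {t : Finset β} {R : α → β → Prop} (h : ∀ a ∈ s, ∃ b ∈ t, R a b) :
    ∃ u ⊆ t, #u ≤ #s ∧ ∀ a ∈ s, ∃ b ∈ u, R a b := by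
  choose f hft hR using h
  refine ⟨s.attach.image fun a => f a.1 a.2, ?_, card_image_le.trans card_attach.le, ?_⟩
  · intro b hb
    obtain ⟨⟨a, ha⟩, -, rfl⟩ := mem_image.1 hb
    exact hft a ha
  · exact fun a ha => ⟨f a ha, mem_image_of_mem _ (mem_attach _ ⟨a, ha⟩), hR a ha⟩

namespace Relation.ReflTransGen

variable {α : Type*} {r : α → α → Prop} {a b : α}

theorem exists_crossing {p : α → Prop} (h : ReflTransGen r a b) (ha : p a) (hb : ¬ p b) :
    ∃ x y, r x y ∧ p x ∧ ¬ p y ∧ ReflTransGen r y b := by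
  induction h with
  | refl => exact absurd ha hb
  | @tail c d _ hcd ih =>
    by_cases hc : p c
    · exact ⟨c, d, hcd, hc, hb, .refl⟩
    · obtain ⟨x, y, hxy, hx, hy, hyc⟩ := ih hc
      exact ⟨x, y, hxy, hx, hy, hyc.tail hcd⟩

theorem of_rel_between {s : α → α → Prop} (h : ReflTransGen r a b)
    (hs : ∀ x y, r x y → ReflTransGen r a x → ReflTransGen r y b → s x y) :
    ReflTransGen s a b := by
  induction h using head_induction_on with
  | refl => exact .refl
  | @head a c hac hcb ih =>
    exact .head (hs a c hac .refl hcb)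
      (ih fun x y hxy hcx hyb => hs x y hxy (hcx.head hac) hyb)

end Relation.ReflTransGen

section Reach

variable {V : Type*} [DecidableEq V] {E F : Finset (V × V)} {u v : V}

theorem Reach.mono (hEF : E ⊆ F) (h : Reach E u v) : Reach F u v :=
  ReflTransGen.mono (fun _ _ hab => hEF hab) u v h

theorem reach_image_swap_iff : Reach (E.image Prod.swap) u v ↔ Reach E v u := by
  have : (fun a b => (a, b) ∈ E.image Prod.swap) = flip fun a b => (a, b) ∈ E := by
    ext a b; simp [flip]
  rw [Reach, this, reflTransGen_swap]
  rfl

theorem Reach.exists_subset_card_lt (r : V) (R : Finset V) (hR : ∀ v, Reach E r v → v ∈ R) :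
    ∃ F ⊆ E, #F < #R ∧ ∀ v, Reach E r v → Reach F r v := by
  classical
  let reached (F : Finset (V × V)) : Finset V := {v ∈ R | Reach F r v}
  have hr : r ∈ reached ∅ := mem_filter.2 ⟨hR r .refl, .refl⟩
  obtain ⟨F, hF, hmax⟩ := (E.powerset.filter fun F => #F < #(reached F)).exists_max_image
    (fun F => #(reached F)) ⟨∅, by simpa using card_pos.2 ⟨r, hr⟩⟩
  rw [mem_filter, mem_powerset] at hF
  refine ⟨F, hF.1, hF.2.trans_le (card_filter_le _ _), fun v hv => ?_⟩
  by_contra hFv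
  obtain ⟨x, y, hxy, hx, hy, -⟩ := ReflTransGen.exists_crossing (p := Reach F r) hv .refl hFv
  have hgrow : insert y (reached F) ⊆ reached (insert (x, y) F) := by
    refine insert_subset (mem_filter.2 ⟨hR y ((hx.mono hF.1).tail hxy), ?_⟩) fun w hw => ?_
    · exact (hx.mono (subset_insert _ _)).tail (mem_insert_self _ _)
    · exact mem_filter.2 ⟨(mem_filter.1 hw).1, (mem_filter.1 hw).2.mono (subset_insert _ _)⟩
  have hcard : #(reached F) < #(reached (insert (x, y) F)) :=
    (card_lt_card (ssubset_insert fun h => hy (mem_filter.1 h).2)).trans_le (card_le_card hgrow)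
  have := hmax (insert (x, y) F) (mem_filter.2 ⟨mem_powerset.2 (insert_subset hxy hF.1),
    (card_insert_le _ _).trans_lt (by omega)⟩)
  omega

end Reach

section Condensation

variable {V : Type*}

def ReachOrder (_E : Finset (V × V)) : Type _ := V

variable [DecidableEq V]

instance (E : Finset (V × V)) : Preorder (ReachOrder E) where
  le := (Reach E : V → V → Prop)
  le_refl _ := ReflTransGen.refl
  le_trans _ _ _ := ReflTransGen.trans

/-- The condensation of the digraph `E`: its strongly connected components, partially ordered
by reachability. -/
abbrev Condensation (E : Finset (V × V)) : Type _ := Antisymmetrization (ReachOrder E) (· ≤ ·)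

def scc (E : Finset (V × V)) (v : V) : Condensation E :=
  toAntisymmetrization (α := ReachOrder E) (· ≤ ·) v

noncomputable def Condensation.root {E : Finset (V × V)} (A : Condensation E) : V :=
  ofAntisymmetrization (α := ReachOrder E) (· ≤ ·) A

variable {E F : Finset (V × V)} {u v : V} {A B : Condensation E}

theorem scc_le_scc_iff : scc E u ≤ scc E v ↔ Reach E u v := Iff.rfl

theorem scc_eq_scc_iff : scc E u = scc E v ↔ Reach E u v ∧ Reach E v u :=
  le_antisymm_iff

@[simp]
theorem scc_root (A : Condensation E) : scc E A.root = A :=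
  toAntisymmetrization_ofAntisymmetrization _ A

instance [Finite V] : Finite (Condensation E) :=
  Finite.of_surjective (scc E) fun A => ⟨A.root, scc_root A⟩

noncomputable instance : DecidableEq (Condensation E) := Classical.decEq _

noncomputable instance [Fintype V] : Fintype (Condensation E) := Fintype.ofFinite _

theorem Reach.of_scc_eq (h : scc E u = scc E v) : Reach E u v := (scc_eq_scc_iff.1 h).1

theorem exists_edge_of_scc_eq (hFE : F ⊆ E) (hne : u ≠ v) (huv : scc E u = scc E v)
    (h : Reach F u v) : ∃ x, (u, x) ∈ F ∧ scc E x = scc E u := by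
  obtain rfl | ⟨x, hux, hxv⟩ := h.cases_head
  · exact absurd rfl hne
  refine ⟨x, hux, le_antisymm ?_ (scc_le_scc_iff.2 (.single (hFE hux)))⟩
  exact huv ▸ scc_le_scc_iff.2 (Reach.mono hFE hxv)

theorem exists_edge_of_covBy (hFE : F ⊆ E) (hAB : A ⋖ B) (hu : scc E u = A) (hv : scc E v = B)
    (h : Reach F u v) : ∃ e ∈ F, scc E e.1 = A ∧ scc E e.2 = B := by
  obtain ⟨x, y, hxy, hx, hy, hyv⟩ := ReflTransGen.exists_crossing (p := fun z => scc E z = A) h hu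
    (hv ▸ hAB.ne')
  have hAy : A ≤ scc E y := hx ▸ scc_le_scc_iff.2 (.single (hFE hxy))
  have hyB : scc E y ≤ B := hv ▸ scc_le_scc_iff.2 (Reach.mono hFE hyv)
  exact ⟨(x, y), hxy, hx, (hAB.eq_or_eq hAy hyB).resolve_left hy⟩

theorem Reach.of_forall_covBy [Finite V] {Et : Finset (V × V)}
    (hcls : ∀ A : Condensation E, ∀ v, scc E v = A → Reach Et v A.root ∧ Reach Et A.root v)
    (hcov : ∀ A B : Condensation E, A ⋖ B → ∃ e ∈ Et, scc E e.1 = A ∧ scc E e.2 = B)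
    (h : Reach E u v) : Reach Et u v := by
  have hsame : ∀ x y, scc E x = scc E y → Reach Et x y := fun x y hxy =>
    (hcls _ x rfl).1.trans (hcls _ y hxy.symm).2
  let _ := LocallyFiniteOrder.ofFiniteIcc fun (A B : Condensation E) => Set.toFinite (Set.Icc A B)
  suffices ∀ B, ReflTransGen (· ⋖ ·) (scc E u) B → ∀ v, scc E v = B → Reach Et u v from
    this _ (le_iff_reflTransGen_covBy.1 (scc_le_scc_iff.2 h)) v rfl
  intro B hB
  induction hB with
  | refl => exact fun v hv => hsame u v hv.symm
  | tail _ hCB ih =>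
    intro v hv
    obtain ⟨e, he, he₁, he₂⟩ := hcov _ _ hCB
    exact ((ih e.1 he₁).tail he).trans (hsame e.2 v (he₂.trans hv.symm))

end Condensation

section Sparsification

variable {V : Type*} [DecidableEq V] {E : Finset (V × V)} {u v : V}

noncomputable def componentEdges (E : Finset (V × V)) (A : Condensation E) : Finset (V × V) :=
  {e ∈ E | scc E e.1 = A ∧ scc E e.2 = A}

theorem mem_componentEdges {A : Condensation E} {e : V × V} :
    e ∈ componentEdges E A ↔ e ∈ E ∧ scc E e.1 = A ∧ scc E e.2 = A := by
  simp [componentEdges]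

theorem Reach.componentEdges {A : Condensation E} (h : Reach E u v) (hu : scc E u = A)
    (hv : scc E v = A) : Reach (componentEdges E A) u v := by
  refine ReflTransGen.of_rel_between h fun x y hxy hux hyv => mem_componentEdges.2 ⟨hxy, ?_⟩
  have h₁ : A ≤ scc E x := hu ▸ scc_le_scc_iff.2 hux
  have h₂ : scc E x ≤ scc E y := scc_le_scc_iff.2 (.single hxy)
  have h₃ : scc E y ≤ A := hv ▸ scc_le_scc_iff.2 hyv
  exact ⟨le_antisymm (h₂.trans h₃) h₁, le_antisymm h₃ (h₁.trans h₂)⟩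

theorem scc_eq_of_reach_componentEdges {A : Condensation E}
    (h : Reach (componentEdges E A) u v) (hne : u ≠ v) : scc E u = A ∧ scc E v = A := by
  obtain rfl | ⟨x, hux, -⟩ := h.cases_head
  · exact absurd rfl hne
  obtain rfl | ⟨y, -, hyv⟩ := h.cases_tail
  · exact absurd rfl hne
  exact ⟨(mem_componentEdges.1 hux).2.1, (mem_componentEdges.1 hyv).2.2⟩

variable [Fintype V]

noncomputable def nonRoots (E : Finset (V × V)) : Finset V := {v | (scc E v).root ≠ v}

open Classical in
noncomputable def coverPairs (E : Finset (V × V)) : Finset (Condensation E × Condensation E) :=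
  {p | p.1 ⋖ p.2}

theorem mem_coverPairs {p : Condensation E × Condensation E} : p ∈ coverPairs E ↔ p.1 ⋖ p.2 := by
  classical
  simp [coverPairs]

/-- Inside `A`, an in-arborescence and an out-arborescence at the root of `A`. -/
theorem exists_subset_strongly_connecting (A : Condensation E) :
    ∃ F ⊆ E, (∀ v, scc E v = A → Reach F v A.root ∧ Reach F A.root v) ∧
      #F ≤ 2 * #{v ∈ nonRoots E | scc E v = A} := by
  classical
  let R : Finset V := {v | scc E v = A}
  have hR : ∀ v, Reach (componentEdges E A) A.root v ∨ Reach (componentEdges E A) v A.root →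
      v ∈ R := by
    intro v hv
    by_cases hr : A.root = v
    · simp [R, ← hr]
    rcases hv with hv | hv
    · simpa [R] using (scc_eq_of_reach_componentEdges hv hr).2
    · simpa [R] using (scc_eq_of_reach_componentEdges hv (Ne.symm hr)).1
  obtain ⟨Fout, hFout, hcard_out, hreach_out⟩ :=
    Reach.exists_subset_card_lt A.root R fun v hv => hR v (.inl hv)
  obtain ⟨Fin, hFin, hcard_in, hreach_in⟩ := Reach.exists_subset_card_lt
    (E := (componentEdges E A).image Prod.swap) A.root R
    fun v hv => hR v (.inr (reach_image_swap_iff.1 hv))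
  have hsub : componentEdges E A ⊆ E := fun e he => (mem_componentEdges.1 he).1
  have hRroot : {v ∈ nonRoots E | scc E v = A} = R.erase A.root := by
    ext v
    simp only [nonRoots, R, mem_filter, mem_univ, true_and, mem_erase]
    constructor <;> exact fun ⟨hv, hvA⟩ => ⟨fun h => hv (hvA ▸ h.symm), hvA⟩
  refine ⟨Fout ∪ Fin.image Prod.swap, union_subset (hFout.trans hsub) ?_, fun v hv => ⟨?_, ?_⟩, ?_⟩
  · intro e he
    obtain ⟨e', he', rfl⟩ := mem_image.1 he
    obtain ⟨e, hec, rfl⟩ := mem_image.1 (hFin he')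
    simpa using hsub hec
  · have hvr : Reach (componentEdges E A) v A.root :=
      (Reach.of_scc_eq (by rw [hv, scc_root])).componentEdges hv (scc_root A)
    exact (reach_image_swap_iff.2 (hreach_in v (reach_image_swap_iff.2 hvr))).mono
      subset_union_right
  · have hrv : Reach (componentEdges E A) A.root v :=
      (Reach.of_scc_eq (by rw [hv, scc_root])).componentEdges (scc_root A) hv
    exact (hreach_out v hrv).mono subset_union_left
  · have hroot : A.root ∈ R := by simp [R]
    rw [hRroot, card_erase_of_mem hroot]
    have := (card_union_le Fout (Fin.image Prod.swap)).trans
      (Nat.add_le_add_left card_image_le _)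
    omega

theorem exists_reach_iff_card_le (E : Finset (V × V)) :
    ∃ Et ⊆ E, (∀ u v, Reach Et u v ↔ Reach E u v) ∧
      #Et ≤ 2 * #(nonRoots E) + #(coverPairs E) := by
  choose F hFE hFreach hFcard using exists_subset_strongly_connecting (E := E)
  obtain ⟨Fc, hFcE, hFc_card, hFc⟩ := exists_subset_card_le_of_forall_exists
    fun (p : Condensation E × Condensation E) hp =>
      exists_edge_of_covBy subset_rfl (mem_coverPairs.1 hp) (scc_root _) (scc_root _)
        (scc_le_scc_iff.1 (by simpa using (mem_coverPairs.1 hp).le))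
  refine ⟨univ.biUnion F ∪ Fc, union_subset (biUnion_subset.2 fun A _ => hFE A) hFcE,
    fun u v => ⟨Reach.mono (union_subset (biUnion_subset.2 fun A _ => hFE A) hFcE), ?_⟩, ?_⟩
  · refine Reach.of_forall_covBy (fun A v hv => ?_) (fun A B hAB => ?_)
    · have hsub : F A ⊆ univ.biUnion F ∪ Fc :=
        (subset_biUnion_of_mem F (mem_univ A)).trans subset_union_left
      exact ⟨(hFreach A v hv).1.mono hsub, (hFreach A v hv).2.mono hsub⟩
    · obtain ⟨e, he, hAB⟩ := hFc (A, B) (mem_coverPairs.2 hAB)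
      exact ⟨e, subset_union_right he, hAB⟩
  · calc #(univ.biUnion F ∪ Fc)
        ≤ ∑ A, #(F A) + #(coverPairs E) :=
          (card_union_le _ _).trans (add_le_add card_biUnion_le hFc_card)
      _ ≤ ∑ A, 2 * #{v ∈ nonRoots E | scc E v = A} + #(coverPairs E) := by
          gcongr with A; exact hFcard A
      _ = 2 * #(nonRoots E) + #(coverPairs E) := by
          rw [← mul_sum, card_eq_sum_card_fiberwise fun v _ => mem_univ (scc E v)]

theorem mul_card_nonRoots_add_card_coverPairs_le {k : ℕ}
    (hmin : ∀ S ⊆ E, ¬ (∀ u v, Reach (E \ S) u v ↔ Reach E u v) → k ≤ #S) :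
    k * (#(nonRoots E) + #(coverPairs E)) ≤ #E := by
  classical
  -- each edge inside a component is charged to its tail, each other edge to the pair of
  -- components it joins
  let label (e : V × V) : V ⊕ (Condensation E × Condensation E) :=
    if scc E e.1 = scc E e.2 then .inl e.1 else .inr (scc E e.1, scc E e.2)
  have hfiber : ∀ t ∈ (nonRoots E).disjSum (coverPairs E), k ≤ #{e ∈ E | label e = t} := by
    intro t ht
    refine hmin _ (filter_subset _ _) fun hsame => ?_
    rcases t with u | ⟨A, B⟩
    · have hu : (scc E u).root ≠ u := by simpa [nonRoots] using ht
      obtain ⟨x, hx, hxu⟩ := exists_edge_of_scc_eq sdiff_subset (Ne.symm hu) (scc_root _).symm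
        ((hsame _ _).2 (Reach.of_scc_eq (scc_root _).symm))
      exact (mem_sdiff.1 hx).2 (mem_filter.2 ⟨(mem_sdiff.1 hx).1, if_pos hxu.symm⟩)
    · have hAB : A ⋖ B := mem_coverPairs.1 (by simpa using ht)
      obtain ⟨e, he, heA, heB⟩ := exists_edge_of_covBy sdiff_subset hAB (scc_root A) (scc_root B)
        ((hsame _ _).2 (scc_le_scc_iff.1 (by simpa using hAB.le)))
      refine (mem_sdiff.1 he).2 (mem_filter.2 ⟨(mem_sdiff.1 he).1, ?_⟩)
      simp [label, heA, heB, hAB.ne]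
  calc k * (#(nonRoots E) + #(coverPairs E))
      = ∑ _t ∈ (nonRoots E).disjSum (coverPairs E), k := by simp [card_disjSum, mul_comm]
    _ ≤ ∑ t ∈ (nonRoots E).disjSum (coverPairs E), #{e ∈ E | label e = t} := sum_le_sum hfiber
    _ = #{e ∈ E | label e ∈ (nonRoots E).disjSum (coverPairs E)} :=
        sum_card_fiberwise_eq_card_filter _ _ _
    _ ≤ #E := card_filter_le _ _

end Sparsification

theorem stmt2_general {V : Type*} [Fintype V] [DecidableEq V] (E : Finset (V × V)) (k : ℕ)
    (hrec : ∃ S : Finset (V × V), S ⊆ E ∧ S.card = k ∧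
      ¬ (∀ u v : V, Reach (E \ S) u v ↔ Reach E u v))
    (hrecmin : ∀ S : Finset (V × V), S ⊆ E →
      (¬ (∀ u v : V, Reach (E \ S) u v ↔ Reach E u v)) → k ≤ S.card) :
    ∃ Et : Finset (V × V), Et ⊆ E ∧ (∀ u v : V, Reach Et u v ↔ Reach E u v) ∧
      (Et.card : ℝ) ≤ 5 * E.card / k := by
  obtain ⟨S, -, hSk, hS⟩ := hrec
  have hk : 0 < k := by
    refine hSk ▸ card_pos.2 (nonempty_iff_ne_empty.2 fun hS0 => hS ?_)
    simp [hS0]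
  obtain ⟨Et, hEtE, hEt, hcard⟩ := exists_reach_iff_card_le E
  have hcut := mul_card_nonRoots_add_card_coverPairs_le hrecmin
  refine ⟨Et, hEtE, hEt, ?_⟩
  rw [le_div_iff₀ (by exact_mod_cast hk)]
  have : #Et * k ≤ 5 * #E := by nlinarith
  exact_mod_cast this

/-- A digraph with no isolated vertices, `m` edges and relative edge connectivity `k`
has a reachability-equivalent subgraph with at most `5m/k` edges. -/
theorem stmt2 {V : Type*} [Fintype V] [DecidableEq V] (E : Finset (V × V)) (k : ℕ)
    (hnoiso : ∀ v : V, ∃ e ∈ E, e.1 = v ∨ e.2 = v)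
    (hrec : ∃ S : Finset (V × V), S ⊆ E ∧ S.card = k ∧
      ¬ (∀ u v : V, Reach (E \ S) u v ↔ Reach E u v))
    (hrecmin : ∀ S : Finset (V × V), S ⊆ E →
      (¬ (∀ u v : V, Reach (E \ S) u v ↔ Reach E u v)) → k ≤ S.card) :
    ∃ Et : Finset (V × V), Et ⊆ E ∧ (∀ u v : V, Reach Et u v ↔ Reach E u v) ∧
      (Et.card : ℝ) ≤ 5 * E.card / k :=
  stmt2_general E k hrec hrecmin
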